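/- For every set A in the σ-ideal ℐ_𝔭 (where 𝔭 is a regular universality parameter) there is a set A* in the ideal ℐ⁰_𝔭 such that A ⊆ ⋃{π̄[A*] : π̄ ∈ rp_H}, where the union ranges over all rational permutations for H. -/

import Mathlib

open Set Filter MeasureTheory NNReal ENNReal

namespace UnivForcing

abbrev Node := List ℕ

/-- `η` is a node respecting `H`: each entry is below the corresponding value of `H`. -/
def IsHNode (H : ℕ → ℕ) (η : Node) : Prop := ∀ i < η.length, η.getD i 0 < H i

/-- A tree of finite sequences: contains the empty sequence and is closed under prefixes. -/
def IsTreeSet (T : Set Node) : Prop :=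
  ([] : Node) ∈ T ∧ ∀ η ∈ T, ∀ ν : Node, ν <+: η → ν ∈ T

/-- The nodes of `T` of length exactly `n`. -/
def levelSet (T : Set Node) (n : ℕ) : Set Node := {η ∈ T | η.length = n}

/-- The nodes of `T` of length at most `n`. -/
def below (T : Set Node) (n : ℕ) : Set Node := {η ∈ T | η.length ≤ n}

/-- A finite `H`-tree of level `N`. -/
def IsFinTree (H : ℕ → ℕ) (T : Set Node) (N : ℕ) : Prop :=
  IsTreeSet T ∧ (∀ η ∈ T, IsHNode H η ∧ η.length ≤ N) ∧
    ∀ η ∈ T, ∃ ν ∈ T, η <+: ν ∧ ν.length = N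

/-- An infinite `H`-tree: a tree of `H`-nodes with no maximal nodes. -/
def IsInfTree (H : ℕ → ℕ) (T : Set Node) : Prop :=
  IsTreeSet T ∧ (∀ η ∈ T, IsHNode H η) ∧ ∀ η ∈ T, ∃ ν ∈ T, η <+: ν ∧ η ≠ ν

/-- A simplified universality parameter (Definition 2.2). -/
structure UnivParam (H : ℕ → ℕ) where
  G : Set (Set Node × ℕ × ℕ)
  F : ℕ → ℕ
  G_tree : ∀ S a b, (S, a, b) ∈ G → ∃ N, IsFinTree H S N ∧ a ≤ b ∧ b ≤ N
  G_root : ((({([] : Node)}) : Set Node), 0, 0) ∈ G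
  G_mono : ∀ S0 a0 b0 N0 S1 N1, (S0, a0, b0) ∈ G → IsFinTree H S0 N0 →
    IsFinTree H S1 N1 → N0 ≤ N1 → levelSet S1 N0 ⊆ S0 →
    ∀ a1 b1, a1 ≤ a0 → b0 ≤ b1 → b1 ≤ N1 → (S1, a1, b1) ∈ G
  F_incr : StrictMono F
  G_amalg : ∀ S0 a0 b0 S1 a1 b1 N S M,
    (S0, a0, b0) ∈ G → (S1, a1, b1) ∈ G →
    IsFinTree H S0 N → IsFinTree H S1 N → IsFinTree H S M → M < N →
    levelSet S0 M ⊆ S → levelSet S1 M ⊆ S →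
    M < a0 → b0 < a1 → F b1 < N →
    ∃ S', (S', a0, F b1) ∈ G ∧ IsFinTree H S' N ∧
      S0 ∪ S1 ⊆ S' ∧ levelSet S' M = levelSet S M

/-- `T` is narrow with respect to the family `G` (Definition 2.3(1)). -/
def IsNarrowG (G : Set (Set Node × ℕ × ℕ)) (T : Set Node) : Prop :=
  ∀ m, ∃ a, m ≤ a ∧ ∃ b, a < b ∧ (below T (b + 1), a, b) ∈ G

def IsNarrow {H : ℕ → ℕ} (p : UnivParam H) (T : Set Node) : Prop := IsNarrowG p.G T

/-- Suitability of a universality parameter (Definition 3.5(1)). -/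
def Suitable {H : ℕ → ℕ} (p : UnivParam H) : Prop :=
  (∀ n, ∃ N, n < N ∧ ∀ S a b NS, (S, a, b) ∈ p.G → IsFinTree H S NS → N ≤ a →
    ∀ η : Node, IsHNode H η → η.length = n →
      ∃ ν : Node, IsHNode H ν ∧ ν.length = NS ∧ η <+: ν ∧ ν ∉ S) ∧
  (∀ n, ∃ N, n < N ∧ ∀ S, IsFinTree H S n →
    ∀ η : Node, IsHNode H η → η.length = N → η.take n ∈ S →
      ∃ S' a b, (S', a, b) ∈ p.G ∧ n < a ∧ a ≤ b ∧ b < N ∧ S ⊆ S' ∧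
        levelSet S' n = levelSet S n ∧ η ∈ S')

/-- The space 𝒳 = ∏_{i<ω} H(i). -/
abbrev XSp (H : ℕ → ℕ) := (i : ℕ) → Fin (H i)

/-- The initial segment of length `n` of a point of 𝒳, as a node. -/
def branchNode (H : ℕ → ℕ) (x : XSp H) (n : ℕ) : Node :=
  List.ofFn fun i : Fin n => (x i : ℕ)

/-- The set of ω-branches `[T]` of a tree `T`, as a subset of 𝒳. -/
def branches (H : ℕ → ℕ) (T : Set Node) : Set (XSp H) :=
  {x | ∀ n, branchNode H x n ∈ T}

/-- A closed narrow set: the branch set of a narrow infinite `H`-tree. -/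
def NarrowClosedG (H : ℕ → ℕ) (G : Set (Set Node × ℕ × ℕ)) (A : Set (XSp H)) : Prop :=
  ∃ T, IsInfTree H T ∧ IsNarrowG G T ∧ A = branches H T

/-- The ideal ℐ⁰ generated by narrow closed sets. -/
def I0G (H : ℕ → ℕ) (G : Set (Set Node × ℕ × ℕ)) : Set (Set (XSp H)) :=
  {A | ∃ (n : ℕ) (f : Fin n → Set (XSp H)),
    (∀ i, NarrowClosedG H G (f i)) ∧ A ⊆ ⋃ i, f i}

/-- The σ-ideal ℐ generated by narrow closed sets. -/
def IpG (H : ℕ → ℕ) (G : Set (Set Node × ℕ × ℕ)) : Set (Set (XSp H)) :=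
  {A | ∃ f : ℕ → Set (XSp H), (∀ n, NarrowClosedG H G (f n)) ∧ A ⊆ ⋃ n, f n}

/-- A coordinate-wise permutation for `H`. -/
structure CWPerm (H : ℕ → ℕ) where
  f : ℕ → ℕ → ℕ
  bij : ∀ n, Set.BijOn (f n) (Set.Iio (H n)) (Set.Iio (H n))
  id_out : ∀ n k, H n ≤ k → f n k = k

/-- The action of a coordinate-wise permutation on a node. -/
def CWPerm.apply {H : ℕ → ℕ} (π : CWPerm H) (η : Node) : Node :=
  η.mapIdx fun i k => π.f i k

/-- `π` is an `n`-coordinate-wise permutation. -/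
def CWPerm.IsRat {H : ℕ → ℕ} (π : CWPerm H) (n : ℕ) : Prop :=
  ∀ m, n < m → ∀ k, π.f m k = k

/-- The action of a coordinate-wise permutation on the space 𝒳. -/
def CWPerm.act {H : ℕ → ℕ} (π : CWPerm H) (x : XSp H) : XSp H :=
  fun i => ⟨π.f i (x i).val, (π.bij i).mapsTo (x i).isLt⟩

/-- A regular universality parameter (Definition 3.13). -/
def RegularParam {H : ℕ → ℕ} (p : UnivParam H) : Prop :=
  Suitable p ∧ ∀ π : CWPerm H, (∃ n, π.IsRat n) →
    ∀ S a b, (S, a, b) ∈ p.G → (π.apply '' S, a, b) ∈ p.G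

/-- The additivity of an ideal (family of sets). -/
noncomputable def addIdeal {α : Type} (I : Set (Set α)) : Cardinal :=
  sInf {c | ∃ A : Set (Set α), A ⊆ I ∧ ⋃₀ A ∉ I ∧ Cardinal.mk A = c}

/-- The cofinality of an ideal (family of sets). -/
noncomputable def cofIdeal {α : Type} (I : Set (Set α)) : Cardinal :=
  sInf {c | ∃ A : Set (Set α), A ⊆ I ∧ (∀ B ∈ I, ∃ C ∈ A, B ⊆ C) ∧ Cardinal.mk A = c}

/-- Eventual domination `f ≤* g`. -/
def evDomLE (f g : ℕ → ℕ) : Prop := ∀ᶠ n in atTop, f n ≤ g n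

/-- The unbounding number 𝔟. -/
noncomputable def bNum : Cardinal :=
  sInf {c | ∃ F : Set (ℕ → ℕ), (∀ g, ∃ f ∈ F, ¬ evDomLE f g) ∧ Cardinal.mk F = c}

/-- The dominating number 𝔡. -/
noncomputable def dNum : Cardinal :=
  sInf {c | ∃ F : Set (ℕ → ℕ), (∀ g, ∃ f ∈ F, evDomLE g f) ∧ Cardinal.mk F = c}

/-- The family 𝒢^{g,A}_𝐅 of Definition 2.8. -/
def GgA (H : ℕ → ℕ) (g : ℕ → ℕ) (A : Set ℕ) (FF : Set Node → NNReal) :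
    Set (Set Node × ℕ × ℕ) :=
  {x | x = ((({([] : Node)}) : Set Node), 0, 0) ∨
    ∃ (S : Set Node) (a b N : ℕ), x = (S, a, b) ∧ IsFinTree H S N ∧ a ≤ b ∧ b ≤ N ∧
      (∀ ν ∈ levelSet S a, ∃ η : Node, IsHNode H η ∧ η.length = N ∧ ν <+: η ∧ η ∉ S) ∧
      ∃ Y : ℕ → Set Node,
        (∀ i ∈ A ∩ Set.Ico a b, IsFinTree H (Y i) (i + 1) ∧ FF (Y i) ≤ (g i : NNReal)) ∧
        ∀ η ∈ levelSet S N, ∃ i ∈ A ∩ Set.Ico a b, η.take (i + 1) ∈ levelSet (Y i) (i + 1)}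

/-- The family 𝒢^cmz_H of Definition 2.12. -/
def Gcmz (H : ℕ → ℕ) : Set (Set Node × ℕ × ℕ) :=
  {x | x = ((({([] : Node)}) : Set Node), 0, 0) ∨
    ∃ (S : Set Node) (a b N : ℕ), x = (S, a, b) ∧ IsFinTree H S N ∧ a ≤ b ∧ b ≤ N ∧
      ((levelSet S b).ncard : ℝ) / (∏ i ∈ Finset.range b, (H i : ℝ)) ≤
        ∑ i ∈ Finset.Icc a b, 1 / ((i : ℝ) + 1) ^ 2}

/-- The level of a set of nodes (the supremum of the lengths of its elements). -/
noncomputable def treeLev (S : Set Node) : ℕ := sSup {n | ∃ η ∈ S, η.length = n}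

/-- The function 𝐅₂ of Example 2.10(2). -/
noncomputable def F2fn (S : Set Node) : NNReal :=
  ((({k | ∃ η ∈ levelSet S (treeLev S), η.getLast? = some k}).ncard - 1 : ℕ) : NNReal)

/-- Immediate successors of a node in a tree. -/
def succs (S : Set Node) (s : Node) : Set Node :=
  {ν ∈ S | s <+: ν ∧ ν.length = s.length + 1}

/-- The function 𝐅₀ of Example 2.10(1). -/
noncomputable def F0fn (S : Set Node) : NNReal :=
  ((sSup {m | ∃ s ∈ S, (∃ ν ∈ S, s <+: ν ∧ s ≠ ν) ∧ m = (succs S s).ncard - 1} : ℕ) : NNReal)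

/-- The function 𝐅₁ of Example 2.10(1). -/
noncomputable def F1fn (S : Set Node) : NNReal :=
  (((levelSet S (treeLev S)).ncard - 1 : ℕ) : NNReal)

/-- The basic cylinder determined by a node. -/
def cyl (H : ℕ → ℕ) (η : Node) : Set (XSp H) := {x | branchNode H x η.length = η}

/-- The mass of the cylinder of a node with respect to the product measure:
`1/∏_{i<lh(η)} H(i)`. -/
noncomputable def cylMass (H : ℕ → ℕ) (η : Node) : ℝ≥0∞ :=
  (∏ i ∈ Finset.range η.length, (H i : ℝ≥0∞))⁻¹

/-- `A` is null with respect to the product measure on 𝒳 (each factor carrying the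
uniform probability measure): for every `ε > 0`, `A` can be covered by countably many
basic cylinders of total mass at most `ε`. -/
def ProdNull (H : ℕ → ℕ) (A : Set (XSp H)) : Prop :=
  ∀ ε : ℝ≥0∞, 0 < ε → ∃ C : ℕ → Node, A ⊆ (⋃ n, cyl H (C n)) ∧ ∑' n, cylMass H (C n) ≤ ε

/-- A condition in the forcing notion Q^tree(𝔭). -/
def QCond (H : ℕ → ℕ) (p : UnivParam H) (q : ℕ × Set Node) : Prop :=
  IsInfTree H q.2 ∧ IsNarrow p q.2

/-- The order of the forcing notion Q^tree(𝔭). -/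
def QLe (q r : ℕ × Set Node) : Prop :=
  q.1 ≤ r.1 ∧ q.2 ⊆ r.2 ∧ levelSet r.2 q.1 = levelSet q.2 q.1


/-- The subtree `T^{[ν]}` of nodes of `T` extending `ν`. -/
def aboveNode (T : Set Node) (ν : Node) : Set Node := {η ∈ T | ν <+: η}

/-- The set `Z(n̄, w̄)` of Proposition 4.6. -/
def Zset (H : ℕ → ℕ) (A : Set ℕ) (nseq : ℕ → ℕ) (w : ℕ → Set ℕ) : Set (XSp H) :=
  {x | ∀ᶠ k in atTop, ∃ i ∈ A ∩ Set.Ico (nseq k) (nseq (k + 1)), ((x i : ℕ) ∈ w i)}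

section Aux
variable {H : ℕ → ℕ}

lemma mem_below {T : Set Node} {n : ℕ} {τ : Node} : τ ∈ below T n ↔ τ ∈ T ∧ τ.length ≤ n :=
  Iff.rfl

lemma mem_levelSet {T : Set Node} {n : ℕ} {τ : Node} :
    τ ∈ levelSet T n ↔ τ ∈ T ∧ τ.length = n := Iff.rfl

lemma isHNode_of_prefix {η ν : Node} (h : ν <+: η) (hη : IsHNode H η) : IsHNode H ν := by
  intro i hi
  rw [List.getD_eq_getElem _ _ hi, h.getElem hi,
    ← List.getD_eq_getElem _ _ (lt_of_lt_of_le hi h.length_le)]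
  exact hη i (lt_of_lt_of_le hi h.length_le)

/-- exact-length extension in an infinite tree -/
lemma infTree_extend {T : Set Node} (hT : IsInfTree H T) {η : Node} (hη : η ∈ T) (L : ℕ)
    (hL : η.length ≤ L) : ∃ ν ∈ T, η <+: ν ∧ ν.length = L := by
  have key : ∀ k : ℕ, ∃ ν ∈ T, η <+: ν ∧ η.length + k ≤ ν.length := by
    intro k
    induction k with
    | zero => exact ⟨η, hη, List.prefix_refl η, le_refl _⟩
    | succ k ih =>
      obtain ⟨ν, hν, hpre, hlen⟩ := ih
      obtain ⟨ν', hν', hpre', hne⟩ := hT.2.2 ν hν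
      have hlt : ν.length < ν'.length :=
        lt_of_le_of_ne hpre'.length_le (fun he => hne (hpre'.eq_of_length he))
      exact ⟨ν', hν', hpre.trans hpre', by omega⟩
  obtain ⟨ν, hν, hpre, hlen⟩ := key (L - η.length)
  refine ⟨ν.take L, hT.1.2 ν hν _ (List.take_prefix L ν), List.prefix_take_iff.2 ⟨hpre, hL⟩, ?_⟩
  rw [List.length_take]; omega

lemma below_finTree {T : Set Node} (hT : IsInfTree H T) (N : ℕ) :
    IsFinTree H (below T N) N := by
  refine ⟨⟨⟨hT.1.1, by simp⟩, ?_⟩, ?_, ?_⟩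
  · rintro η ⟨hη, hlen⟩ ν hpre
    exact ⟨hT.1.2 η hη ν hpre, le_trans hpre.length_le hlen⟩
  · rintro η ⟨hη, hlen⟩
    exact ⟨hT.2.1 η hη, hlen⟩
  · rintro η ⟨hη, hlen⟩
    obtain ⟨ν, hν, hpre, hlen'⟩ := infTree_extend hT hη N hlen
    exact ⟨ν, ⟨hν, le_of_eq hlen'⟩, hpre, hlen'⟩

lemma prefix_of_mem_prefix {τ σ : Node} {n : ℕ} (h : τ <+: σ) (hn : τ.length ≤ n) :
    τ <+: σ.take n := List.prefix_take_iff.2 ⟨h, hn⟩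

/-- L9 : if two finite trees agree at the lower top level, the below-part agrees. -/
lemma below_eq_of_levelSet_eq {S S' : Set Node} {M M' : ℕ} (hS : IsFinTree H S M)
    (hS' : IsFinTree H S' M') (hMM : M ≤ M')
    (hlev : levelSet S' M = levelSet S M) : below S' M = S := by
  ext τ
  constructor
  · rintro ⟨hτ, hlen⟩
    obtain ⟨σ, hσ, hpre, hσlen⟩ := hS'.2.2 τ hτ
    have htake : σ.take M ∈ levelSet S' M := by
      refine ⟨hS'.1.2 σ hσ _ (List.take_prefix _ _), ?_⟩
      rw [List.length_take]; omega
    rw [hlev] at htake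
    exact hS.1.2 _ htake.1 τ (prefix_of_mem_prefix hpre hlen)
  · intro hτ
    obtain ⟨σ, hσ, hpre, hσlen⟩ := hS.2.2 τ hτ
    have hσ' : σ ∈ levelSet S M := ⟨hσ, hσlen⟩
    rw [← hlev] at hσ'
    exact ⟨hS'.1.2 σ hσ'.1 τ hpre, (hS.2.1 τ hτ).2⟩

/-- finiteness of level sets -/
lemma finite_levelSet {T : Set Node} (hT : ∀ η ∈ T, IsHNode H η) (n : ℕ) :
    (levelSet T n).Finite := by
  classical
  set B : ℕ := (Finset.range n).sup H + 1 with hB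
  have : levelSet T n ⊆ Set.range (fun g : Fin n → Fin B => List.ofFn fun i => (g i : ℕ)) := by
    rintro η ⟨hη, hlen⟩
    have hbound : ∀ i : Fin n, η.getD (i : ℕ) 0 < B := by
      intro i
      have h1 : η.getD (i : ℕ) 0 < H i := hT η hη i (by omega)
      have h2 : H (i : ℕ) ≤ (Finset.range n).sup H :=
        Finset.le_sup (Finset.mem_range.2 i.isLt)
      omega
    refine ⟨fun i => ⟨η.getD (i : ℕ) 0, hbound i⟩, ?_⟩
    apply List.ext_getElem (by simp [hlen])
    intro i h1 h2
    simp only [List.getElem_ofFn]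
    exact List.getD_eq_getElem _ _ h2
  exact Set.Finite.subset (Set.finite_range _) this

end Aux
section Perm
variable {H : ℕ → ℕ}

lemma bijOn_swap {a b : ℕ} {s : Set ℕ} (ha : a ∈ s) (hb : b ∈ s) :
    Set.BijOn (Equiv.swap a b) s s := by
  have hmaps : Set.MapsTo (Equiv.swap a b) s s := by
    intro k hk
    rcases eq_or_ne k a with rfl | hka
    · rwa [Equiv.swap_apply_left]
    rcases eq_or_ne k b with rfl | hkb
    · rwa [Equiv.swap_apply_right]
    · rwa [Equiv.swap_apply_of_ne_of_ne hka hkb]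
  refine ⟨hmaps, (Equiv.injective _).injOn, ?_⟩
  intro k hk
  refine ⟨Equiv.swap a b k, hmaps hk, ?_⟩
  simp

lemma CWPerm.apply_length (π : CWPerm H) (l : Node) : (π.apply l).length = l.length :=
  List.length_mapIdx

lemma CWPerm.apply_getElem (π : CWPerm H) (l : Node) {i : ℕ} (h : i < (π.apply l).length) :
    (π.apply l)[i] = π.f i (l[i]'(by rwa [π.apply_length] at h)) :=
  List.getElem_mapIdx

lemma CWPerm.apply_isHNode (π : CWPerm H) {η : Node} (hη : IsHNode H η) :
    IsHNode H (π.apply η) := by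
  intro i hi
  rw [π.apply_length] at hi
  rw [List.getD_eq_getElem _ _ (by rwa [π.apply_length]), π.apply_getElem]
  have : η[i] < H i := by
    rw [← List.getD_eq_getElem _ _ hi]; exact hη i hi
  exact (π.bij i).mapsTo this

lemma CWPerm.apply_prefix (π : CWPerm H) {τ σ : Node} (h : τ <+: σ) :
    π.apply τ <+: π.apply σ := by
  rw [List.prefix_iff_eq_take]
  apply List.ext_getElem
  · rw [List.length_take, π.apply_length, π.apply_length]
    have := h.length_le; omega
  · intro i h1 h2
    rw [List.getElem_take, π.apply_getElem, π.apply_getElem]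
    congr 1
    exact h.getElem (by rwa [π.apply_length] at h1)

lemma CWPerm.image_finTree (π : CWPerm H) {S : Set Node} {N : ℕ} (hS : IsFinTree H S N) :
    IsFinTree H (π.apply '' S) N := by
  have happnil : π.apply [] = [] := rfl
  refine ⟨⟨⟨[], hS.1.1, happnil⟩, ?_⟩, ?_, ?_⟩
  · rintro η ⟨σ, hσ, rfl⟩ ν hpre
    refine ⟨σ.take ν.length, hS.1.2 σ hσ _ (List.take_prefix _ _), ?_⟩
    have h1 : π.apply (σ.take ν.length) <+: π.apply σ := π.apply_prefix (List.take_prefix _ _)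
    have h2 : (π.apply (σ.take ν.length)).length = ν.length := by
      rw [π.apply_length, List.length_take]
      have := hpre.length_le
      rw [π.apply_length] at this
      omega
    rw [List.prefix_iff_eq_take] at h1 hpre
    rw [h1, h2, ← hpre]
  · rintro η ⟨σ, hσ, rfl⟩
    refine ⟨π.apply_isHNode (hS.2.1 σ hσ).1, ?_⟩
    rw [π.apply_length]; exact (hS.2.1 σ hσ).2
  · rintro η ⟨σ, hσ, rfl⟩
    obtain ⟨ν, hν, hpre, hlen⟩ := hS.2.2 σ hσ
    exact ⟨π.apply ν, ⟨ν, hν, rfl⟩, π.apply_prefix hpre, by rw [π.apply_length]; exact hlen⟩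

/-- the coordinatewise permutation swapping the entries of `η` and `ν`. -/
def swapPerm (H : ℕ → ℕ) (η ν : Node) (hη : IsHNode H η) (hν : IsHNode H ν)
    (hl : η.length = ν.length) : CWPerm H where
  f i k := if i < η.length then Equiv.swap (η.getD i 0) (ν.getD i 0) k else k
  bij n := by
    by_cases hn : n < η.length
    · simp only [if_pos hn]
      exact bijOn_swap (hη n hn) (hν n (by omega))
    · simp only [if_neg hn]
      exact Set.bijOn_id _
  id_out n k hk := by
    by_cases hn : n < η.length
    · simp only [if_pos hn]
      exact Equiv.swap_apply_of_ne_of_ne (by have := hη n hn; omega) (by have := hν n (by omega); omega)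
    · simp only [if_neg hn]

lemma swapPerm_isRat {η ν : Node} (hη : IsHNode H η) (hν : IsHNode H ν)
    (hl : η.length = ν.length) : (swapPerm H η ν hη hν hl).IsRat η.length := by
  intro m hm k
  simp only [swapPerm, if_neg (by omega : ¬ m < η.length)]

lemma swapPerm_apply_append {η ν : Node} (hη : IsHNode H η) (hν : IsHNode H ν)
    (hl : η.length = ν.length) (ρ : Node) :
    (swapPerm H η ν hη hν hl).apply (η ++ ρ) = ν ++ ρ := by
  set π := swapPerm H η ν hη hν hl
  apply List.ext_getElem
  · rw [π.apply_length]; simp [hl]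
  · intro i h1 h2
    rw [π.apply_getElem]
    have hlen1 : i < η.length + ρ.length := by rw [π.apply_length] at h1; simpa using h1
    by_cases hi : i < η.length
    · have hη' : (η ++ ρ)[i]'(by simpa using hlen1) = η[i] := by
        rw [List.getElem_append]; simp [hi]
      have hν' : (ν ++ ρ)[i] = ν[i]'(by omega) := by
        rw [List.getElem_append]; simp [show i < ν.length by omega]
      rw [hη', hν']
      show (if i < η.length then Equiv.swap (η.getD i 0) (ν.getD i 0) _ else _) = _
      rw [if_pos hi, List.getD_eq_getElem _ _ hi, List.getD_eq_getElem _ _ (by omega : i < ν.length),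
        Equiv.swap_apply_left]
    · have hη' : (η ++ ρ)[i]'(by simpa using hlen1) = ρ[i - η.length]'(by omega) := by
        rw [List.getElem_append]; simp [hi]
      have hν' : (ν ++ ρ)[i] = ρ[i - ν.length]'(by omega) := by
        rw [List.getElem_append]; simp [show ¬ i < ν.length by omega]
      rw [hη', hν']
      show (if i < η.length then Equiv.swap (η.getD i 0) (ν.getD i 0) _ else _) = _
      rw [if_neg hi]
      congr 1
      omega

end Perm
section Rhead
variable {H : ℕ → ℕ}

/-- the tree obtained by grafting all tails of `T` above `η` onto the node `ν`. -/
def Rhead (T : Set Node) (ν η : Node) : Set Node :=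
  {τ | τ <+: ν} ∪ {l | ∃ ρ : Node, l = ν ++ ρ ∧ η ++ ρ ∈ T}

lemma mem_Rhead_of_long {T : Set Node} {ν η τ : Node} (hτ : τ ∈ Rhead T ν η)
    (hlen : ν.length < τ.length) : ∃ ρ : Node, τ = ν ++ ρ ∧ η ++ ρ ∈ T := by
  rcases hτ with h | h
  · exact absurd h.length_le (by omega)
  · exact h

lemma Rhead_infTree {T : Set Node} (hT : IsInfTree H T) {η ν : Node} (hη : η ∈ T)
    (hν : IsHNode H ν) (hl : η.length = ν.length) : IsInfTree H (Rhead T ν η) := by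
  have hηH : IsHNode H η := hT.2.1 η hη
  refine ⟨⟨Or.inl (List.nil_prefix), ?_⟩, ?_, ?_⟩
  · rintro τ (hτ | ⟨ρ, rfl, hρ⟩) τ' hpre
    · exact Or.inl (hpre.trans hτ)
    · by_cases hlen : τ'.length ≤ ν.length
      · exact Or.inl ((List.isPrefix_append_of_length hlen).1 hpre)
      · refine Or.inr ⟨ρ.take (τ'.length - ν.length), ?_, ?_⟩
        · rw [List.prefix_iff_eq_take] at hpre
          conv_lhs => rw [hpre]
          rw [List.take_append,
            List.take_of_length_le (by omega : ν.length ≤ τ'.length)]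
        · refine hT.1.2 _ hρ _ ⟨ρ.drop (τ'.length - ν.length), ?_⟩
          rw [List.append_assoc, List.take_append_drop]
  · rintro τ (hτ | ⟨ρ, rfl, hρ⟩)
    · exact isHNode_of_prefix hτ hν
    · intro i hi
      rw [List.length_append] at hi
      by_cases hiv : i < ν.length
      · rw [List.getD_eq_getElem _ _ (by simp; omega), List.getElem_append]
        simp only [dif_pos hiv]
        rw [← List.getD_eq_getElem _ _ hiv]
        exact hν i hiv
      · rw [List.getD_eq_getElem _ _ (by simp; omega), List.getElem_append]
        simp only [dif_neg hiv]
        have hTH := hT.2.1 _ hρ i (by rw [List.length_append]; omega)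
        rw [List.getD_eq_getElem _ _ (by rw [List.length_append]; omega),
          List.getElem_append] at hTH
        simp only [dif_neg (show ¬ i < η.length by omega)] at hTH
        convert hTH using 2
        omega
  · rintro τ (hτ | ⟨ρ, rfl, hρ⟩)
    · obtain ⟨σ, hσ, hpre, hne⟩ := hT.2.2 η hη
      obtain ⟨ρ, rfl⟩ := hpre
      have hρne : ρ ≠ [] := by rintro rfl; simp at hne
      refine ⟨ν ++ ρ, Or.inr ⟨ρ, rfl, hσ⟩, hτ.trans (List.prefix_append ν ρ), ?_⟩
      intro he
      have := hτ.length_le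
      rw [he, List.length_append] at this
      have := List.length_pos_iff.2 hρne
      omega
    · obtain ⟨σ, hσ, hpre, hne⟩ := hT.2.2 (η ++ ρ) hρ
      obtain ⟨δ, rfl⟩ := hpre
      have hδne : δ ≠ [] := by rintro rfl; simp at hne
      refine ⟨ν ++ (ρ ++ δ), Or.inr ⟨ρ ++ δ, rfl, by rwa [← List.append_assoc]⟩,
        by rw [← List.append_assoc]; exact List.prefix_append _ _, ?_⟩
      intro he
      have : (ν ++ ρ).length = (ν ++ (ρ ++ δ)).length := by rw [← he]
      simp only [List.length_append] at this
      have := List.length_pos_iff.2 hδne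
      omega

lemma Rhead_narrow (p : UnivParam H) (hreg : RegularParam p) {T : Set Node}
    (hT : IsInfTree H T) (hNar : IsNarrowG p.G T) {η ν : Node} (hη : η ∈ T)
    (hν : IsHNode H ν) (hl : η.length = ν.length) : IsNarrowG p.G (Rhead T ν η) := by
  have hηH : IsHNode H η := hT.2.1 η hη
  intro m
  obtain ⟨a, ha, b, hab, hG⟩ := hNar (max m (ν.length + 1))
  refine ⟨a, le_trans (le_max_left _ _) ha, b, hab, ?_⟩
  set π := swapPerm H η ν hηH hν hl with hπ
  have hG' : (π.apply '' below T (b + 1), a, b) ∈ p.G :=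
    hreg.2 π ⟨η.length, swapPerm_isRat hηH hν hl⟩ _ a b hG
  have hfin0 : IsFinTree H (π.apply '' below T (b + 1)) (b + 1) :=
    π.image_finTree (below_finTree hT (b + 1))
  have hfin1 : IsFinTree H (below (Rhead T ν η) (b + 1)) (b + 1) :=
    below_finTree (Rhead_infTree hT hη hν hl) (b + 1)
  refine p.G_mono _ a b (b + 1) _ (b + 1) hG' hfin0 hfin1 le_rfl ?_ a b le_rfl le_rfl
    (by omega)
  rintro τ ⟨⟨hτ, hτle⟩, hτlen⟩
  obtain ⟨ρ, rfl, hρ⟩ := mem_Rhead_of_long hτ (by omega)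
  refine ⟨η ++ ρ, ⟨hρ, ?_⟩, swapPerm_apply_append hηH hν hl ρ⟩
  rw [List.length_append] at hτlen ⊢
  omega

lemma Rhead_below_subset {S : Set Node} {M : ℕ} (hS : IsFinTree H S M) {T : Set Node}
    {ν η : Node} (hνS : ν ∈ S) (hνlen : ν.length = M) :
    below (Rhead T ν η) M ⊆ S := by
  rintro τ ⟨hτ | ⟨ρ, rfl, hρ⟩, hlen⟩
  · exact hS.1.2 ν hνS τ hτ
  · have : ρ = [] := by
      rw [List.length_append] at hlen
      exact List.eq_nil_of_length_eq_zero (by omega)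
    rw [this, List.append_nil]
    exact hνS

end Rhead
section Fold
variable {H : ℕ → ℕ}

lemma levelSet_below {W : Set Node} {N n : ℕ} (hn : n ≤ N) :
    levelSet (below W N) n = levelSet W n := by
  ext τ; constructor
  · rintro ⟨⟨h1, h2⟩, h3⟩; exact ⟨h1, h3⟩
  · rintro ⟨h1, h3⟩; exact ⟨⟨h1, by omega⟩, h3⟩

lemma below_G_extend (p : UnivParam H) {W : Set Node} (hW : IsInfTree H W) {a b : ℕ}
    (hG : (below W (b + 1), a, b) ∈ p.G) {N : ℕ} (hN : b < N) :
    (below W N, a, b) ∈ p.G := by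
  refine p.G_mono _ a b (b + 1) _ N hG (below_finTree hW (b + 1)) (below_finTree hW N)
    (by omega) ?_ a b le_rfl le_rfl (by omega)
  rintro τ ⟨⟨h1, h2⟩, h3⟩
  exact ⟨h1, by omega⟩

lemma fold_amalg (p : UnivParam H) :
    ∀ (L : List (Set Node)), L ≠ [] → (∀ W ∈ L, IsInfTree H W ∧ IsNarrowG p.G W) →
    ∀ (M : ℕ) (S : Set Node), IsFinTree H S M → (∀ W ∈ L, below W M ⊆ S) → ∀ m : ℕ,
    ∃ a b : ℕ, m < a ∧ M < a ∧ a ≤ b ∧ ∀ N, b < N →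
      ∃ C : Set Node, (C, a, b) ∈ p.G ∧ IsFinTree H C N ∧ (∀ W ∈ L, below W N ⊆ C) ∧
        levelSet C M ⊆ levelSet S M ∧ (2 ≤ L.length → levelSet C M = levelSet S M) := by
  intro L
  induction L with
  | nil => intro h; exact absurd rfl h
  | cons W L ih =>
    intro _ hL M S hS hbel m
    have hW : IsInfTree H W ∧ IsNarrowG p.G W := hL W List.mem_cons_self
    obtain ⟨a, ha, b, hab, hG⟩ := hW.2 (max m M + 1)
    have hWbel : below W M ⊆ S := hbel W List.mem_cons_self
    have hlev0 : ∀ N, M ≤ N → levelSet (below W N) M ⊆ S := by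
      intro N hMN τ hτ
      rw [levelSet_below hMN] at hτ
      exact hWbel ⟨hτ.1, le_of_eq hτ.2⟩
    rcases eq_or_ne L [] with rfl | hLne
    · -- base case : singleton list
      refine ⟨a, b, by omega, by omega, by omega, ?_⟩
      intro N hN
      refine ⟨below W N, below_G_extend p hW.1 hG hN, below_finTree hW.1 N, ?_, ?_, by simp⟩
      · intro W' hW'
        simp only [List.mem_cons, List.not_mem_nil, or_false] at hW'
        subst hW'; exact le_refl _
      · intro τ hτ
        rw [levelSet_below (by omega : M ≤ N)] at hτ
        exact ⟨hWbel ⟨hτ.1, le_of_eq hτ.2⟩, hτ.2⟩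
    · -- recursive case
      obtain ⟨a', b', ha'1, ha'2, ha'b', hspec⟩ := ih hLne
        (fun W' hW' => hL W' (List.mem_cons_of_mem _ hW')) M S hS
        (fun W' hW' => hbel W' (List.mem_cons_of_mem _ hW')) (p.F b)
      have hFb : b ≤ p.F b := p.F_incr.le_apply
      have hFb' : b' ≤ p.F b' := p.F_incr.le_apply
      refine ⟨a, p.F b', by omega, by omega, by omega, ?_⟩
      intro N hN
      obtain ⟨C', hC'G, hC'fin, hC'bel, hC'lev, _⟩ := hspec N (by omega)
      have hS0G : (below W N, a, b) ∈ p.G := below_G_extend p hW.1 hG (by omega)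
      obtain ⟨S', hS'G, hS'fin, hS'sub, hS'lev⟩ := p.G_amalg (below W N) a b C' a' b' N S M
        hS0G hC'G (below_finTree hW.1 N) hC'fin hS (by omega)
        (fun τ hτ => (hlev0 N (by omega) hτ : τ ∈ S)) (fun τ hτ => (hC'lev hτ).1)
        (by omega) (by omega) hN
      refine ⟨S', hS'G, hS'fin, ?_, le_of_eq hS'lev, fun _ => hS'lev⟩
      intro W' hW'
      rcases List.mem_cons.1 hW' with rfl | hW'
      · exact fun τ hτ => hS'sub (Or.inl hτ)
      · exact fun τ hτ => hS'sub (Or.inr (hC'bel W' hW' hτ))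

end Fold
section Step
variable {H : ℕ → ℕ}

lemma step_lemma (p : UnivParam H) (hreg : RegularParam p) (T : Set Node)
    (hT : IsInfTree H T) (hTnar : IsNarrowG p.G T) (k M : ℕ) (S : Set Node)
    (Ws : List (Set Node)) (hS : IsFinTree H S M)
    (hWs : ∀ W ∈ Ws, IsInfTree H W ∧ IsNarrowG p.G W ∧ below W M ⊆ S) :
    ∃ (M' : ℕ) (S' : Set Node) (Ws' : List (Set Node)),
      M < M' ∧ k < M' ∧ IsFinTree H S' M' ∧ levelSet S' M = levelSet S M ∧
      (∀ W ∈ Ws, W ∈ Ws') ∧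
      (∀ W ∈ Ws', IsInfTree H W ∧ IsNarrowG p.G W ∧ below W M' ⊆ S') ∧
      (∃ a b : ℕ, k < a ∧ a ≤ b ∧ b < M' ∧ (S', a, b) ∈ p.G) ∧
      (∃ ν : Node, IsHNode H ν ∧ ν.length = M ∧
        ∀ η ∈ levelSet T M, Rhead T ν η ∈ Ws') := by
  classical
  -- choose the grafting node ν
  obtain ⟨ν, hνS, _, hνlen⟩ := hS.2.2 [] hS.1.1
  have hνH : IsHNode H ν := (hS.2.1 ν hνS).1
  -- enumerate the level-M nodes of T
  have hfin : (levelSet T M).Finite := finite_levelSet hT.2.1 M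
  obtain ⟨η₀, hη₀⟩ : ∃ η₀, η₀ ∈ levelSet T M := by
    obtain ⟨η₀, h1, _, h3⟩ := infTree_extend hT hT.1.1 M (by simp)
    exact ⟨η₀, h1, h3⟩
  set ηlist := hfin.toFinset.toList with hηlist
  have hmemη : ∀ η : Node, η ∈ ηlist ↔ η ∈ levelSet T M := by
    intro η; rw [hηlist, Finset.mem_toList, Set.Finite.mem_toFinset]
  set L : List (Set Node) :=
    Rhead T ν η₀ :: (ηlist.map (fun η => Rhead T ν η) ++ Ws) with hLdef
  have hRgood : ∀ η ∈ levelSet T M, IsInfTree H (Rhead T ν η) ∧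
      IsNarrowG p.G (Rhead T ν η) ∧ below (Rhead T ν η) M ⊆ S := by
    intro η hη
    have hlη : η.length = ν.length := by rw [hη.2, hνlen]
    exact ⟨Rhead_infTree hT hη.1 hνH hlη, Rhead_narrow p hreg hT hTnar hη.1 hνH hlη,
      Rhead_below_subset hS hνS hνlen⟩
  have hLgood : ∀ W ∈ L, IsInfTree H W ∧ IsNarrowG p.G W ∧ below W M ⊆ S := by
    intro W hW
    rcases List.mem_cons.1 hW with rfl | hW
    · exact hRgood η₀ hη₀
    rcases List.mem_append.1 hW with hW | hW
    · obtain ⟨η, hη, rfl⟩ := List.mem_map.1 hW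
      exact hRgood η ((hmemη η).1 hη)
    · exact hWs W hW
  obtain ⟨a, b, hka, hMa, hab, hspec⟩ := fold_amalg p L (by simp [hLdef])
    (fun W hW => ⟨(hLgood W hW).1, (hLgood W hW).2.1⟩) M S hS
    (fun W hW => (hLgood W hW).2.2) k
  set M' : ℕ := max (b + 1) (max (M + 1) (k + 1)) with hM'def
  obtain ⟨C, hCG, hCfin, hCbel, _, hClev⟩ := hspec M' (by omega)
  have hlen2 : 2 ≤ L.length := by
    have h0 : 0 < ηlist.length :=
      List.length_pos_iff.2 (List.ne_nil_of_mem ((hmemη η₀).2 hη₀))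
    simp only [hLdef, List.length_cons, List.length_append, List.length_map]
    omega
  refine ⟨M', C, L, by omega, by omega, hCfin, hClev hlen2, ?_, ?_, ⟨a, b, hka, hab, by omega, hCG⟩, ?_⟩
  · intro W hW
    exact List.mem_cons_of_mem _ (List.mem_append.2 (Or.inr hW))
  · intro W hW
    exact ⟨(hLgood W hW).1, (hLgood W hW).2.1, hCbel W hW⟩
  · refine ⟨ν, hνH, hνlen, ?_⟩
    intro η hη
    exact List.mem_cons_of_mem _ (List.mem_append.2 (Or.inl (List.mem_map.2 ⟨η, (hmemη η).2 hη, rfl⟩)))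

end Step
section Branch
variable {H : ℕ → ℕ}

lemma branchNode_length (x : XSp H) (n : ℕ) : (branchNode H x n).length = n := by
  simp [branchNode]

lemma branchNode_getElem (x : XSp H) (n i : ℕ) (h : i < (branchNode H x n).length) :
    (branchNode H x n)[i] = (x i : ℕ) := by
  simp only [branchNode]
  rw [List.getElem_ofFn]

lemma branchNode_getD (x : XSp H) {n i : ℕ} (h : i < n) :
    (branchNode H x n).getD i 0 = (x i : ℕ) := by
  rw [List.getD_eq_getElem _ _ (by rwa [branchNode_length]), branchNode_getElem]

lemma branchNode_isHNode (x : XSp H) (n : ℕ) : IsHNode H (branchNode H x n) := by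
  intro i hi
  rw [branchNode_length] at hi
  rw [branchNode_getD x hi]
  exact (x i).isLt

lemma branchNode_take (x : XSp H) {n L : ℕ} (h : n ≤ L) :
    (branchNode H x L).take n = branchNode H x n := by
  apply List.ext_getElem
  · rw [List.length_take, branchNode_length, branchNode_length]; omega
  · intro i h1 h2
    rw [List.getElem_take, branchNode_getElem, branchNode_getElem]

lemma branchNode_split (x : XSp H) {M L : ℕ} (h : M ≤ L) :
    branchNode H x M ++ (branchNode H x L).drop M = branchNode H x L := by
  conv_rhs => rw [← List.take_append_drop M (branchNode H x L)]
  rw [branchNode_take x h]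

lemma branchNode_low {y : XSp H} {ν : Node} {M : ℕ} (hM : ν.length = M)
    (hlow : ∀ i, i < M → ((y i : ℕ)) = ν.getD i 0) {L : ℕ} (hL : L ≤ M) :
    branchNode H y L = ν.take L := by
  apply List.ext_getElem
  · rw [List.length_take, branchNode_length]; omega
  · intro i h1 h2
    rw [branchNode_length] at h1
    rw [List.getElem_take, branchNode_getElem, hlow i (by omega),
      List.getD_eq_getElem _ _ (by omega)]

lemma branchNode_high {x y : XSp H} {ν : Node} {M : ℕ} (hM : ν.length = M)
    (hlow : ∀ i, i < M → ((y i : ℕ)) = ν.getD i 0)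
    (hhigh : ∀ i, M ≤ i → y i = x i) {L : ℕ} (hL : M ≤ L) :
    branchNode H y L = ν ++ (branchNode H x L).drop M := by
  apply List.ext_getElem
  · rw [branchNode_length, List.length_append, List.length_drop, branchNode_length]; omega
  · intro i h1 h2
    rw [branchNode_length] at h1
    rw [branchNode_getElem, List.getElem_append]
    by_cases hi : i < ν.length
    · rw [dif_pos hi, hlow i (by omega), List.getD_eq_getElem _ _ hi]
    · rw [dif_neg hi, List.getElem_drop, branchNode_getElem,
        show M + (i - ν.length) = i from by omega, hhigh i (by omega)]

lemma root_finTree : IsFinTree H {([] : Node)} 0 := by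
  refine ⟨⟨rfl, ?_⟩, ?_, ?_⟩
  · rintro η rfl ν hν
    exact List.prefix_nil.1 hν
  · rintro η rfl
    exact ⟨fun i hi => by simp at hi, le_rfl⟩
  · rintro η rfl
    exact ⟨[], rfl, List.prefix_refl _, rfl⟩

end Branch
/-- Proposition 3.15(2): every member of ℐ_𝔭 is covered by the union of the images of
a single member of ℐ⁰_𝔭 under all rational permutations. -/
theorem Ip_covered_by_rational_images (H : ℕ → ℕ) (hH : ∀ n, 2 ≤ H n) (p : UnivParam H)
    (hp : RegularParam p) (A : Set (XSp H)) (hA : A ∈ IpG H p.G) :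
    ∃ B ∈ I0G H p.G, A ⊆
      {y | ∃ π : CWPerm H, (∃ n, CWPerm.IsRat π n) ∧ y ∈ CWPerm.act π '' B} := by
  classical
  obtain ⟨f, hfN, hAf⟩ := hA
  choose Tf hTfinf hTfnar hTfeq using hfN
  -- the state space of the recursive construction
  let Inv : ℕ × Set Node × List (Set Node) → Prop := fun s =>
    IsFinTree H s.2.1 s.1 ∧
      ∀ W ∈ s.2.2, IsInfTree H W ∧ IsNarrowG p.G W ∧ below W s.1 ⊆ s.2.1
  let Link : ℕ → ℕ × Set Node × List (Set Node) → ℕ × Set Node × List (Set Node) → Prop :=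
    fun k s s' =>
      s.1 < s'.1 ∧ k < s'.1 ∧ levelSet s'.2.1 s.1 = levelSet s.2.1 s.1 ∧
      (∀ W ∈ s.2.2, W ∈ s'.2.2) ∧
      (∃ a b : ℕ, k < a ∧ a ≤ b ∧ b < s'.1 ∧ (s'.2.1, a, b) ∈ p.G) ∧
      (∃ ν : Node, IsHNode H ν ∧ ν.length = s.1 ∧
        ∀ η ∈ levelSet (Tf k) s.1, Rhead (Tf k) ν η ∈ s'.2.2)
  have hstep : ∀ k s, Inv s → ∃ s', Inv s' ∧ Link k s s' := by
    rintro k ⟨M, S, Ws⟩ ⟨h1, h2⟩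
    obtain ⟨M', S', Ws', hMM', hkM', hfin', hlev', hmono', hinv', hwit', hcov'⟩ :=
      step_lemma p hp (Tf k) (hTfinf k) (hTfnar k) k M S Ws h1 h2
    exact ⟨(M', S', Ws'), ⟨hfin', hinv'⟩,
      hMM', hkM', hlev', hmono', hwit', hcov'⟩
  -- build the chain
  let g : ℕ → {s : ℕ × Set Node × List (Set Node) // Inv s} := fun k =>
    Nat.rec ⟨(0, {([] : Node)}, ([] : List (Set Node))),
        ⟨root_finTree, by rintro W ⟨⟩⟩⟩
      (fun k prev => ⟨Classical.choose (hstep k prev.1 prev.2),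
        (Classical.choose_spec (hstep k prev.1 prev.2)).1⟩) k
  have hlink : ∀ k, Link k (g k).1 (g (k + 1)).1 := fun k =>
    (Classical.choose_spec (hstep k (g k).1 (g k).2)).2
  set M : ℕ → ℕ := fun k => (g k).1.1 with hM
  set S : ℕ → Set Node := fun k => (g k).1.2.1 with hSdef
  set Ws : ℕ → List (Set Node) := fun k => (g k).1.2.2 with hWsdef
  have hfin : ∀ k, IsFinTree H (S k) (M k) := fun k => (g k).2.1
  have hWinv : ∀ k, ∀ W ∈ Ws k, IsInfTree H W ∧ IsNarrowG p.G W ∧ below W (M k) ⊆ S k :=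
    fun k => (g k).2.2
  have hMlt : ∀ k, M k < M (k + 1) := fun k => (hlink k).1
  have hkM : ∀ k, k < M (k + 1) := fun k => (hlink k).2.1
  have hlev : ∀ k, levelSet (S (k + 1)) (M k) = levelSet (S k) (M k) :=
    fun k => (hlink k).2.2.1
  have hWmono : ∀ k, ∀ W ∈ Ws k, W ∈ Ws (k + 1) := fun k => (hlink k).2.2.2.1
  have hwit : ∀ k, ∃ a b : ℕ, k < a ∧ a ≤ b ∧ b < M (k + 1) ∧ (S (k + 1), a, b) ∈ p.G :=
    fun k => (hlink k).2.2.2.2.1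
  have hcov : ∀ k, ∃ ν : Node, IsHNode H ν ∧ ν.length = M k ∧
      ∀ η ∈ levelSet (Tf k) (M k), Rhead (Tf k) ν η ∈ Ws (k + 1) :=
    fun k => (hlink k).2.2.2.2.2
  have hMmono : ∀ j k, j ≤ k → M j ≤ M k := by
    intro j k h
    induction h with
    | refl => exact le_rfl
    | step h' ih => exact le_trans ih (le_of_lt (hMlt _))
  have hbelow_succ : ∀ k, below (S (k + 1)) (M k) = S k := fun k =>
    below_eq_of_levelSet_eq (hfin k) (hfin (k + 1)) (le_of_lt (hMlt k)) (hlev k)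
  have hSsub : ∀ k, S k ⊆ S (k + 1) := by
    intro k τ hτ
    have : τ ∈ below (S (k + 1)) (M k) := by rw [hbelow_succ k]; exact hτ
    exact this.1
  have hSchain : ∀ j k, j ≤ k → S j ⊆ S k := by
    intro j k h
    induction h with
    | refl => exact subset_rfl
    | step h' ih => exact ih.trans (hSsub _)
  have hbelow : ∀ j k, j ≤ k → below (S k) (M j) = S j := by
    intro j k h
    induction h with
    | refl =>
      ext τ
      exact ⟨fun h => h.1, fun h => ⟨h, ((hfin j).2.1 τ h).2⟩⟩
    | @step k hjk ih =>
      ext τ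
      constructor
      · rintro ⟨hτ, hlen⟩
        have h2 : τ ∈ below (S (k + 1)) (M k) :=
          ⟨hτ, le_trans hlen (hMmono j k hjk)⟩
        rw [hbelow_succ k] at h2
        rw [← ih]
        exact ⟨h2, hlen⟩
      · intro hτ
        exact ⟨(hSchain j k hjk).trans (hSsub k) hτ, ((hfin j).2.1 τ hτ).2⟩
  -- the big tree
  set Tst : Set Node := ⋃ k, S k with hTst
  have hmemT : ∀ τ : Node, τ ∈ Tst ↔ ∃ k, τ ∈ S k := fun τ => Set.mem_iUnion
  have hbelT : ∀ k, below Tst (M k) = S k := by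
    intro k
    ext τ
    constructor
    · rintro ⟨hτ, hlen⟩
      obtain ⟨j, hj⟩ := (hmemT τ).1 hτ
      rcases le_total j k with h | h
      · exact hSchain j k h hj
      · rw [← hbelow k j h]
        exact ⟨hj, hlen⟩
    · intro hτ
      exact ⟨(hmemT τ).2 ⟨k, hτ⟩, ((hfin k).2.1 τ hτ).2⟩
  have hTinf : IsInfTree H Tst := by
    refine ⟨⟨(hmemT _).2 ⟨0, rfl⟩, ?_⟩, ?_, ?_⟩
    · intro τ hτ ν hν
      obtain ⟨k, hk⟩ := (hmemT τ).1 hτ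
      exact (hmemT ν).2 ⟨k, (hfin k).1.2 τ hk ν hν⟩
    · intro τ hτ
      obtain ⟨k, hk⟩ := (hmemT τ).1 hτ
      exact ((hfin k).2.1 τ hk).1
    · intro τ hτ
      obtain ⟨k, hk⟩ := (hmemT τ).1 hτ
      obtain ⟨σ, hσ, hpre, hσlen⟩ := (hfin k).2.2 τ hk
      have hσ1 : σ ∈ levelSet (S k) (M k) := ⟨hσ, hσlen⟩
      rw [← hlev k] at hσ1
      obtain ⟨σ', hσ', hpre', hσ'len⟩ := (hfin (k + 1)).2.2 σ hσ1.1
      refine ⟨σ', (hmemT σ').2 ⟨k + 1, hσ'⟩, hpre.trans hpre', ?_⟩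
      intro he
      have h1 : τ.length ≤ M k := ((hfin k).2.1 τ hk).2
      have h2 := hMlt k
      rw [he, hσ'len] at h1
      omega
  have hTnar : IsNarrowG p.G Tst := by
    intro m
    obtain ⟨a, b, hma, hab, hbM, hG⟩ := hwit m
    refine ⟨a, by omega, M (m + 1), by omega, ?_⟩
    refine p.G_mono (S (m + 1)) a b (M (m + 1)) _ (M (m + 1) + 1) hG (hfin (m + 1))
      (below_finTree hTinf _) (by omega) ?_ a (M (m + 1)) le_rfl (by omega) (by omega)
    rintro τ ⟨⟨hτ, _⟩, hlen⟩
    have : τ ∈ below Tst (M (m + 1)) := ⟨hτ, le_of_eq hlen⟩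
    rw [hbelT (m + 1)] at this
    exact this
  have hWchain : ∀ j k, j ≤ k → ∀ W ∈ Ws j, W ∈ Ws k := by
    intro j k h
    induction h with
    | refl => exact fun W hW => hW
    | step h' ih => exact fun W hW => hWmono _ W (ih W hW)
  have hMbig : ∀ n, n < M (n + 1) := hkM
  have hWT : ∀ k W, W ∈ Ws k → W ⊆ Tst := by
    intro k W hW τ hτ
    set j : ℕ := max k (τ.length + 1) with hj
    have hWj : W ∈ Ws j := hWchain k j (le_max_left _ _) W hW
    have hlen : τ.length ≤ M j := by
      have h1 := hMbig τ.length
      have h2 := hMmono (τ.length + 1) j (le_max_right _ _)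
      omega
    exact (hmemT τ).2 ⟨j, ((hWinv j W hWj).2.2 ⟨hτ, hlen⟩)⟩
  -- the single narrow closed set
  refine ⟨branches H Tst, ⟨1, fun _ => branches H Tst,
    fun _ => ⟨Tst, hTinf, hTnar, rfl⟩, fun z hz => Set.mem_iUnion.2 ⟨0, hz⟩⟩, ?_⟩
  -- coverage
  intro x hx
  obtain ⟨n, hxn⟩ := Set.mem_iUnion.1 (hAf hx)
  rw [hTfeq n] at hxn
  obtain ⟨ν, hνH, hνlen, hcovn⟩ := hcov n
  set η : Node := branchNode H x (M n) with hηdef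
  have hηH : IsHNode H η := branchNode_isHNode x (M n)
  have hηlen : η.length = M n := branchNode_length x (M n)
  have hηmem : η ∈ levelSet (Tf n) (M n) := ⟨hxn (M n), hηlen⟩
  have hRT : Rhead (Tf n) ν η ⊆ Tst := hWT (n + 1) _ (hcovn η hηmem)
  have hνget : ∀ i, i < M n → ν.getD i 0 < H i := fun i hi => hνH i (by omega)
  set y : XSp H := fun i => if h : i < M n then ⟨ν.getD i 0, hνget i h⟩ else x i with hy
  have hylow : ∀ i, i < M n → ((y i : ℕ)) = ν.getD i 0 := by
    intro i hi; rw [hy]; simp only [dif_pos hi]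
  have hyhigh : ∀ i, M n ≤ i → y i = x i := by
    intro i hi; rw [hy]; simp only [dif_neg (by omega : ¬ i < M n)]
  have hyB : y ∈ branches H Tst := by
    intro L
    apply hRT
    rcases le_or_gt L (M n) with hL | hL
    · left
      rw [branchNode_low hνlen hylow hL]
      exact List.take_prefix _ _
    · right
      refine ⟨(branchNode H x L).drop (M n), ?_, ?_⟩
      · exact branchNode_high hνlen hylow hyhigh (le_of_lt hL)
      · rw [hηdef, branchNode_split x (le_of_lt hL)]
        exact hxn L
  have hlen' : ν.length = η.length := by omega
  set π : CWPerm H := swapPerm H ν η hνH hηH hlen' with hπ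
  refine ⟨π, ⟨ν.length, swapPerm_isRat hνH hηH hlen'⟩, y, hyB, ?_⟩
  funext i
  apply Fin.ext
  show π.f i ((y i : ℕ)) = (x i : ℕ)
  by_cases hi : i < M n
  · have : π.f i ((y i : ℕ)) =
        Equiv.swap (ν.getD i 0) (η.getD i 0) ((y i : ℕ)) := by
      rw [hπ]; simp only [swapPerm, if_pos (show i < ν.length by omega)]
    rw [this, hylow i hi, Equiv.swap_apply_left, hηdef, branchNode_getD x hi]
  · have : π.f i ((y i : ℕ)) = ((y i : ℕ)) := by
      rw [hπ]; simp only [swapPerm, if_neg (show ¬ i < ν.length by omega)]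
    rw [this, hyhigh i (by omega)]
end UnivForcing
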